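/- arXiv:2511.06133 — 2 statements merged into one kernel-verified Lean document; each statement's English description precedes it below -/
import Mathlib

section
/- Let g be a symmetric bilinear form on a real vector space V with basis (e₀, e₁, e₂, ..., e_{n-1}) such that g(e₀,e₀) = 0, g(e₁,e₁) = 0, g(e₀,e₁) = -1, g(e₀,eⱼ) = g(e₁,eⱼ) = 0 for j ≥ 2, and g(eᵢ,eⱼ) = -δᵢⱼ for i,j ≥ 2. If v = v⁰e₀ + v¹e₁ + Σⱼ vʲeⱼ is timelike (g(v,v) > 0) and w = w⁰e₀ + w¹e₁ + Σⱼ wʲeⱼ is timelike, then v and w lie in the same connected component of the set of timelike vectors if and only if v¹ and w¹ have the same sign. (Equivalently: the sign of the e₁-component is constant on each connected component of the timelike cone, and both signs occur.) -/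
/-!
In null coordinates the form reads `g(u, u) = -2 u⁰u¹ - ∑_{j ≥ 2} (uʲ)²`, so a timelike vector
has `u⁰u¹ < 0`. In particular `u¹` does not vanish on the timelike cone, hence has constant sign
on each of its connected components. Conversely, for `p = e₁ - e₀` one has `g(u, p) = u¹ - u⁰`,
which on the cone has the sign of `u¹`; and for any symmetric form with `g(p, p) > 0` the set
`{u | g(u, u) > 0 ∧ g(u, p) > 0}` is star-shaped about `p`, since
`g(ap + tu, ap + tu) = a² g(p, p) + 2at g(u, p) + t² g(u, u)`. Applied to `±p` this makes both
sign classes connected.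
-/

open Set

theorem mem_connectedComponentIn_iff_mul_pos {X : Type*} [TopologicalSpace X] {S : Set X}
    {f : X → ℝ} (hf : ContinuousOn f S) (hS : ∀ x ∈ S, f x ≠ 0)
    (hpos : IsPreconnected {x ∈ S | 0 < f x}) (hneg : IsPreconnected {x ∈ S | f x < 0})
    {v w : X} (hv : v ∈ S) (hw : w ∈ S) :
    w ∈ connectedComponentIn S v ↔ 0 < f v * f w := by
  constructor
  · intro hwC
    have hCS := connectedComponentIn_subset S v
    have hvC := mem_connectedComponentIn hv
    by_contra! hvw
    have hzero : (0 : ℝ) ∈ uIcc (f v) (f w) := by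
      rcases mul_nonpos_iff.mp hvw with h | h
      · exact mem_uIcc_of_ge h.2 h.1
      · exact mem_uIcc_of_le h.1 h.2
    have himage : IsPreconnected (f '' connectedComponentIn S v) :=
      isPreconnected_connectedComponentIn.image f (hf.mono hCS)
    obtain ⟨x, hxC, hx⟩ := (isPreconnected_iff_ordConnected.mp himage).uIcc_subset
      (mem_image_of_mem f hvC) (mem_image_of_mem f hwC) hzero
    exact hS x (hCS hxC) hx
  · intro hvw
    rcases mul_pos_iff.mp hvw with ⟨hv', hw'⟩ | ⟨hv', hw'⟩
    · exact hpos.subset_connectedComponentIn ⟨hv, hv'⟩ (sep_subset _ _) ⟨hw, hw'⟩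
    · exact hneg.subset_connectedComponentIn ⟨hv, hv'⟩ (sep_subset _ _) ⟨hw, hw'⟩

theorem LinearMap.starConvex_setOf_pos_apply_self_and_pos_apply
    {𝕜 V : Type*} [Field 𝕜] [LinearOrder 𝕜] [IsStrictOrderedRing 𝕜] [AddCommGroup V] [Module 𝕜 V]
    {g : V →ₗ[𝕜] V →ₗ[𝕜] 𝕜} (hg : ∀ x y, g x y = g y x) {p : V} (hp : 0 < g p p) :
    StarConvex 𝕜 p {u | 0 < g u u ∧ 0 < g u p} := by
  rintro u ⟨huu, hup⟩ a t ha ht hat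
  have hpu : g p u = g u p := hg p u
  simp only [mem_ofPred_eq, map_add, map_smul, LinearMap.add_apply, LinearMap.smul_apply,
    smul_eq_mul, hpu]
  rcases ha.eq_or_lt with rfl | ha'
  · obtain rfl : t = 1 := by simpa using hat
    simpa using ⟨huu, hup⟩
  · constructor <;> nlinarith [mul_pos ha' ha', mul_nonneg ha ht, mul_nonneg ht ht]

namespace Module.Basis

variable {ι V : Type*} [Fintype ι] [DecidableEq ι] [AddCommGroup V] [Module ℝ V]

noncomputable def lightconeForm (b : Basis ι ℝ V) (i₀ i₁ : ι) : V →ₗ[ℝ] V →ₗ[ℝ] ℝ :=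
  -((b.coord i₀).smulRight (b.coord i₁) + (b.coord i₁).smulRight (b.coord i₀)) -
    ∑ i ∈ ({i₀, i₁} : Finset ι)ᶜ, (b.coord i).smulRight (b.coord i)

variable (b : Basis ι ℝ V) {i₀ i₁ : ι}

@[simp]
theorem lightconeForm_apply (u v : V) :
    b.lightconeForm i₀ i₁ u v = -(b.repr u i₀ * b.repr v i₁ + b.repr u i₁ * b.repr v i₀) -
      ∑ i ∈ ({i₀, i₁} : Finset ι)ᶜ, b.repr u i * b.repr v i := by
  simp [lightconeForm]

theorem eq_lightconeForm {g : V →ₗ[ℝ] V →ₗ[ℝ] ℝ} (hg : ∀ x y, g x y = g y x) (hne : i₀ ≠ i₁)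
    (h₀₀ : g (b i₀) (b i₀) = 0) (h₁₁ : g (b i₁) (b i₁) = 0) (h₀₁ : g (b i₀) (b i₁) = -1)
    (h₀ : ∀ j, j ≠ i₀ → j ≠ i₁ → g (b i₀) (b j) = 0)
    (h₁ : ∀ j, j ≠ i₀ → j ≠ i₁ → g (b i₁) (b j) = 0)
    (h : ∀ i j, i ≠ i₀ → i ≠ i₁ → j ≠ i₀ → j ≠ i₁ → g (b i) (b j) = if i = j then -1 else 0) :
    g = b.lightconeForm i₀ i₁ := by
  refine LinearMap.ext_basis b b fun i j => ?_
  simp only [lightconeForm_apply, repr_self, Finsupp.single_apply]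
  rcases eq_or_ne i i₀ with hi₀ | hi₀
  · rcases eq_or_ne j i₀ with hj₀ | hj₀
    · simp [hi₀, hj₀, h₀₀, hne]
    rcases eq_or_ne j i₁ with hj₁ | hj₁
    · simp [hi₀, hj₁, h₀₁, hne]
    · simp [hi₀, h₀ j hj₀ hj₁, hj₀, hj₁, hj₀.symm]
  rcases eq_or_ne i i₁ with hi₁ | hi₁
  · rcases eq_or_ne j i₀ with hj₀ | hj₀
    · simp [hi₁, hj₀, hg (b i₁), h₀₁, hne]
    rcases eq_or_ne j i₁ with hj₁ | hj₁
    · simp [hi₁, hj₁, h₁₁, hne.symm]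
    · simp [hi₁, h₁ j hj₀ hj₁, hj₀, hj₁, hj₁.symm]
  rcases eq_or_ne j i₀ with hj₀ | hj₀
  · simp [hj₀, hg (b i), h₀ i hi₀ hi₁, hi₀, hi₁]
  rcases eq_or_ne j i₁ with hj₁ | hj₁
  · simp [hj₁, hg (b i), h₁ i hi₀ hi₁, hi₀, hi₁]
  · simp [h i j hi₀ hi₁ hj₀ hj₁, hi₀, hi₁, hj₀, hj₁, neg_ite]

theorem lightconeForm_comm (u v : V) : b.lightconeForm i₀ i₁ u v = b.lightconeForm i₀ i₁ v u := by
  simp only [lightconeForm_apply, mul_comm, add_comm]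

theorem repr_mul_repr_neg_of_lightconeForm_pos {u : V} (hu : 0 < b.lightconeForm i₀ i₁ u u) :
    b.repr u i₀ * b.repr u i₁ < 0 := by
  have hsq : 0 ≤ ∑ i ∈ ({i₀, i₁} : Finset ι)ᶜ, b.repr u i * b.repr u i :=
    Finset.sum_nonneg fun i _ => mul_self_nonneg _
  rw [lightconeForm_apply] at hu
  linarith

theorem lightconeForm_apply_sub_basis (hne : i₀ ≠ i₁) (u : V) :
    b.lightconeForm i₀ i₁ u (b i₁ - b i₀) = b.repr u i₁ - b.repr u i₀ := by
  have hrest : ∑ i ∈ ({i₀, i₁} : Finset ι)ᶜ, b.repr u i * b.repr (b i₁ - b i₀) i = 0 :=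
    Finset.sum_eq_zero fun i hi => by simp_all [eq_comm]
  rw [lightconeForm_apply, hrest]
  simp [hne, hne.symm, sub_eq_add_neg]

theorem lightconeForm_sub_basis_self (hne : i₀ ≠ i₁) :
    b.lightconeForm i₀ i₁ (b i₁ - b i₀) (b i₁ - b i₀) = 2 := by
  rw [lightconeForm_apply_sub_basis b hne]
  norm_num [hne, hne.symm]

theorem repr_pos_iff_lightconeForm_sub_basis_pos (hne : i₀ ≠ i₁) {u : V}
    (hu : 0 < b.lightconeForm i₀ i₁ u u) :
    0 < b.repr u i₁ ↔ 0 < b.lightconeForm i₀ i₁ u (b i₁ - b i₀) := by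
  have := b.repr_mul_repr_neg_of_lightconeForm_pos hu
  rw [lightconeForm_apply_sub_basis b hne]
  constructor <;> intro h <;> nlinarith

theorem repr_neg_iff_lightconeForm_sub_basis_pos (hne : i₀ ≠ i₁) {u : V}
    (hu : 0 < b.lightconeForm i₀ i₁ u u) :
    b.repr u i₁ < 0 ↔ 0 < b.lightconeForm i₀ i₁ u (b i₀ - b i₁) := by
  have := b.repr_mul_repr_neg_of_lightconeForm_pos hu
  rw [← neg_sub, map_neg, lightconeForm_apply_sub_basis b hne]
  constructor <;> intro h <;> nlinarith

section Topology

variable [TopologicalSpace V] [IsTopologicalAddGroup V] [ContinuousSMul ℝ V]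

theorem isPreconnected_setOf_lightconeForm_pos_and_repr_pos (hne : i₀ ≠ i₁) :
    IsPreconnected {u | 0 < b.lightconeForm i₀ i₁ u u ∧ 0 < b.repr u i₁} := by
  have hp : 0 < b.lightconeForm i₀ i₁ (b i₁ - b i₀) (b i₁ - b i₀) := by
    rw [b.lightconeForm_sub_basis_self hne]
    norm_num
  have hset : {u | 0 < b.lightconeForm i₀ i₁ u u ∧ 0 < b.repr u i₁} =
      {u | 0 < b.lightconeForm i₀ i₁ u u ∧ 0 < b.lightconeForm i₀ i₁ u (b i₁ - b i₀)} :=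
    Set.ext fun u => and_congr_right (b.repr_pos_iff_lightconeForm_sub_basis_pos hne)
  rw [hset]
  exact ((LinearMap.starConvex_setOf_pos_apply_self_and_pos_apply b.lightconeForm_comm
    hp).isPathConnected ⟨hp, hp⟩).isConnected.isPreconnected

theorem isPreconnected_setOf_lightconeForm_pos_and_repr_neg (hne : i₀ ≠ i₁) :
    IsPreconnected {u | 0 < b.lightconeForm i₀ i₁ u u ∧ b.repr u i₁ < 0} := by
  have hp : 0 < b.lightconeForm i₀ i₁ (b i₀ - b i₁) (b i₀ - b i₁) := by
    rw [← neg_sub, map_neg, LinearMap.map_neg₂, neg_neg, b.lightconeForm_sub_basis_self hne]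
    norm_num
  have hset : {u | 0 < b.lightconeForm i₀ i₁ u u ∧ b.repr u i₁ < 0} =
      {u | 0 < b.lightconeForm i₀ i₁ u u ∧ 0 < b.lightconeForm i₀ i₁ u (b i₀ - b i₁)} :=
    Set.ext fun u => and_congr_right (b.repr_neg_iff_lightconeForm_sub_basis_pos hne)
  rw [hset]
  exact ((LinearMap.starConvex_setOf_pos_apply_self_and_pos_apply b.lightconeForm_comm
    hp).isPathConnected ⟨hp, hp⟩).isConnected.isPreconnected

end Topology

end Module.Basis

/-- In a Lorentzian vector space with a null basis
`(e₀, e₁, e₂, …, e_{n-1})`, a timelike vector has a nonzero `e₁`-component, and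
two timelike vectors lie in the same connected component of the timelike cone
iff their `e₁`-components have the same sign. -/
theorem timelike_sameComponent_iff_sameSign_e1
    {n : ℕ} (hn : 2 ≤ n) {V : Type*} [NormedAddCommGroup V] [NormedSpace ℝ V]
    [FiniteDimensional ℝ V]
    (g : V →ₗ[ℝ] V →ₗ[ℝ] ℝ) (hsymm : ∀ x y : V, g x y = g y x)
    (b : Module.Basis (Fin n) ℝ V)
    (h00 : g (b ⟨0, by omega⟩) (b ⟨0, by omega⟩) = 0)
    (h11 : g (b ⟨1, by omega⟩) (b ⟨1, by omega⟩) = 0)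
    (h01 : g (b ⟨0, by omega⟩) (b ⟨1, by omega⟩) = -1)
    (h0j : ∀ j : Fin n, 2 ≤ (j : ℕ) → g (b ⟨0, by omega⟩) (b j) = 0)
    (h1j : ∀ j : Fin n, 2 ≤ (j : ℕ) → g (b ⟨1, by omega⟩) (b j) = 0)
    (hij : ∀ i j : Fin n, 2 ≤ (i : ℕ) → 2 ≤ (j : ℕ) →
      g (b i) (b j) = if i = j then -1 else 0)
    (v w : V) (hv : 0 < g v v) (hw : 0 < g w w) :
    (b.repr v ⟨1, by omega⟩ ≠ 0) ∧
      (w ∈ connectedComponentIn {u : V | 0 < g u u} v ↔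
        0 < (b.repr v ⟨1, by omega⟩) * (b.repr w ⟨1, by omega⟩)) := by
  set i₀ : Fin n := ⟨0, by omega⟩
  set i₁ : Fin n := ⟨1, by omega⟩
  have hne : i₀ ≠ i₁ := by simp [i₀, i₁, Fin.ext_iff]
  have two_le : ∀ j : Fin n, j ≠ i₀ → j ≠ i₁ → 2 ≤ (j : ℕ) := by
    intro j h₀ h₁
    simp only [ne_eq, Fin.ext_iff, i₀, i₁] at h₀ h₁
    omega
  obtain rfl : g = b.lightconeForm i₀ i₁ :=
    b.eq_lightconeForm hsymm hne h00 h11 h01 (fun j h₀ h₁ => h0j j (two_le j h₀ h₁))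
      (fun j h₀ h₁ => h1j j (two_le j h₀ h₁))
      (fun i j hi₀ hi₁ hj₀ hj₁ => hij i j (two_le i hi₀ hi₁) (two_le j hj₀ hj₁))
  have hrepr_ne : ∀ u ∈ {u : V | 0 < b.lightconeForm i₀ i₁ u u}, b.repr u i₁ ≠ 0 :=
    fun u hu => right_ne_zero_of_mul (b.repr_mul_repr_neg_of_lightconeForm_pos hu).ne
  exact ⟨hrepr_ne v hv, mem_connectedComponentIn_iff_mul_pos
    (b.coord i₁).continuous_of_finiteDimensional.continuousOn hrepr_ne
    (b.isPreconnected_setOf_lightconeForm_pos_and_repr_pos hne)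
    (b.isPreconnected_setOf_lightconeForm_pos_and_repr_neg hne) hv hw⟩
end

section
/- For each integer n ≥ 0, the function ψ_n(r) = ((1+r²)/(1-r²) + n) · rⁿ satisfies on (0,1) the ordinary differential equation ψ_n'' + ψ_n'/r - n²ψ_n/r² - 8ψ_n/(1 - r²)² = 0, which is the radial form of Δψ - 8ψ/(1 - (x²+y²))² = 0. -/
private lemma aux_pow_sub (m : ℕ) {s : ℝ} (hs : s ≠ 0) :
    (m : ℝ) * s ^ (m - 1) = (m : ℝ) * s ^ m / s := by
  cases m with
  | zero => simp
  | succ k => rw [Nat.add_sub_cancel, pow_succ]; field_simp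

/-- For each `n ≥ 0` the function
`ψ_n(r) = ((1+r²)/(1-r²) + n)·rⁿ` satisfies on `(0,1)` the ODE
`ψ_n'' + ψ_n'/r - n²ψ_n/r² - 8ψ_n/(1-r²)² = 0`. -/
theorem radial_solution_kerr_type_minus
    (n : ℕ) :
    ∀ r ∈ Set.Ioo (0 : ℝ) 1,
      deriv (deriv fun s : ℝ => ((1 + s ^ 2) / (1 - s ^ 2) + n) * s ^ n) r +
        deriv (fun s : ℝ => ((1 + s ^ 2) / (1 - s ^ 2) + n) * s ^ n) r / r -
        (n : ℝ) ^ 2 * (((1 + r ^ 2) / (1 - r ^ 2) + n) * r ^ n) / r ^ 2 -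
        8 * (((1 + r ^ 2) / (1 - r ^ 2) + n) * r ^ n) / (1 - r ^ 2) ^ 2
        = 0 := by
  intro r hr
  obtain ⟨hr0, hr1⟩ := hr
  have hrne : r ≠ 0 := ne_of_gt hr0
  have hrsq : (1 : ℝ) - r ^ 2 ≠ 0 := by nlinarith
  set g : ℝ → ℝ := fun s =>
    (2 * s * (1 - s ^ 2) - (1 + s ^ 2) * (-(2 * s))) / ((1 - s ^ 2) ^ 2) * s ^ n
      + ((1 + s ^ 2) / (1 - s ^ 2) + (n : ℝ)) * ((n : ℝ) * s ^ n / s) with hg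
  -- derivative of the inner rational factor
  have hu : ∀ s : ℝ, (1 : ℝ) - s ^ 2 ≠ 0 →
      HasDerivAt (fun s : ℝ => (1 + s ^ 2) / (1 - s ^ 2) + (n : ℝ))
        ((2 * s * (1 - s ^ 2) - (1 + s ^ 2) * (-(2 * s))) / ((1 - s ^ 2) ^ 2)) s := by
    intro s hs2
    have h1 : HasDerivAt (fun s : ℝ => 1 + s ^ 2) (2 * s) s := by
      simpa using (hasDerivAt_pow 2 s).const_add 1
    have h2 : HasDerivAt (fun s : ℝ => 1 - s ^ 2) (-(2 * s)) s := by
      simpa using (hasDerivAt_pow 2 s).const_sub 1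
    exact (h1.div h2 hs2).add_const _
  -- first derivative of f is g on the open set where s ≠ 0 and 1 - s² ≠ 0
  have key : ∀ s : ℝ, s ≠ 0 → (1 : ℝ) - s ^ 2 ≠ 0 →
      HasDerivAt (fun s : ℝ => ((1 + s ^ 2) / (1 - s ^ 2) + (n : ℝ)) * s ^ n) (g s) s := by
    intro s hs hs2
    have := (hu s hs2).mul (hasDerivAt_pow n s)
    rw [aux_pow_sub n hs] at this
    exact this
  have hkeyr := key r hrne hrsq
  -- eventual equality of deriv f with g near r
  have hopen : IsOpen {s : ℝ | s ≠ 0 ∧ (1 : ℝ) - s ^ 2 ≠ 0} := by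
    have : {s : ℝ | s ≠ 0 ∧ (1 : ℝ) - s ^ 2 ≠ 0}
        = (fun s : ℝ => s) ⁻¹' {(0 : ℝ)}ᶜ ∩ (fun s : ℝ => 1 - s ^ 2) ⁻¹' {(0 : ℝ)}ᶜ := by
      ext s; simp [Set.mem_setOf_eq]
    rw [this]
    exact (isOpen_compl_singleton.preimage continuous_id).inter
      (isOpen_compl_singleton.preimage (by continuity))
  have hmem : {s : ℝ | s ≠ 0 ∧ (1 : ℝ) - s ^ 2 ≠ 0} ∈ nhds r :=
    hopen.mem_nhds ⟨hrne, hrsq⟩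
  have heq : (deriv fun s : ℝ => ((1 + s ^ 2) / (1 - s ^ 2) + (n : ℝ)) * s ^ n)
      =ᶠ[nhds r] g :=
    Filter.eventuallyEq_of_mem hmem (fun s hs => (key s hs.1 hs.2).deriv)
  -- derivative of g at r
  have hg' : HasDerivAt g
      (((2 * (1 - r ^ 2) + 2 * r * (-(2 * r)) -
          ((2 * r) * (-(2 * r)) + (1 + r ^ 2) * (-2))) * ((1 - r ^ 2) ^ 2) -
        (2 * r * (1 - r ^ 2) - (1 + r ^ 2) * (-(2 * r))) *
          (2 * (1 - r ^ 2) * (-(2 * r)))) / ((1 - r ^ 2) ^ 2) ^ 2 * r ^ n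
      + (2 * r * (1 - r ^ 2) - (1 + r ^ 2) * (-(2 * r))) / ((1 - r ^ 2) ^ 2) *
          ((n : ℝ) * r ^ n / r)
      + ((2 * r * (1 - r ^ 2) - (1 + r ^ 2) * (-(2 * r))) / ((1 - r ^ 2) ^ 2) *
          ((n : ℝ) * r ^ n / r)
        + ((1 + r ^ 2) / (1 - r ^ 2) + (n : ℝ)) *
          (((n : ℝ) * ((n : ℝ) * r ^ n / r) * r - (n : ℝ) * r ^ n * 1) / r ^ 2))) r := by
    have hA1 : HasDerivAt (fun s : ℝ => 2 * s * (1 - s ^ 2) - (1 + s ^ 2) * (-(2 * s)))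
        (2 * (1 - r ^ 2) + 2 * r * (-(2 * r)) -
          ((2 * r) * (-(2 * r)) + (1 + r ^ 2) * (-2))) r := by
      have h1 : HasDerivAt (fun s : ℝ => 2 * s) (2 : ℝ) r := by
        simpa using (hasDerivAt_id r).const_mul (2 : ℝ)
      have h2 : HasDerivAt (fun s : ℝ => 1 - s ^ 2) (-(2 * r)) r := by
        simpa using (hasDerivAt_pow 2 r).const_sub 1
      have h3 : HasDerivAt (fun s : ℝ => 1 + s ^ 2) (2 * r) r := by
        simpa using (hasDerivAt_pow 2 r).const_add 1
      have h4 : HasDerivAt (fun s : ℝ => -(2 * s)) (-2 : ℝ) r := by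
        exact h1.neg
      exact (h1.mul h2).sub (h3.mul h4)
    have hA2 : HasDerivAt (fun s : ℝ => ((1 - s ^ 2) ^ 2))
        (2 * (1 - r ^ 2) * (-(2 * r))) r := by
      have h2 : HasDerivAt (fun s : ℝ => 1 - s ^ 2) (-(2 * r)) r := by
        simpa using (hasDerivAt_pow 2 r).const_sub 1
      simpa [pow_one, Pi.pow_def] using h2.pow 2
    have hden : ((1 - r ^ 2) ^ 2) ≠ 0 := pow_ne_zero 2 hrsq
    have hA := (hA1.div hA2 hden).mul (hasDerivAt_pow n r)
    rw [aux_pow_sub n hrne] at hA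
    have hB1 : HasDerivAt (fun s : ℝ => (n : ℝ) * s ^ n) ((n : ℝ) * ((n : ℝ) * r ^ n / r)) r := by
      have := (hasDerivAt_pow n r).const_mul (n : ℝ)
      rwa [aux_pow_sub n hrne] at this
    have hB2 : HasDerivAt (fun s : ℝ => (n : ℝ) * s ^ n / s)
        (((n : ℝ) * ((n : ℝ) * r ^ n / r) * r - (n : ℝ) * r ^ n * 1) / r ^ 2) r :=
      hB1.div (hasDerivAt_id r) hrne
    have hB := (hu r hrsq).mul hB2
    exact hA.add hB
  have hd2 : deriv (deriv fun s : ℝ => ((1 + s ^ 2) / (1 - s ^ 2) + (n : ℝ)) * s ^ n) r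
      = deriv g r := heq.deriv_eq
  rw [hd2, hg'.deriv, hkeyr.deriv, hg]
  field_simp
  ring
end
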